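/- If a strictly feasible pair exists, then at every minimizer (p*, y*) of the network delay, whenever y*_q > 0 on an energy link q with start node i and end node j, one has g_l(p*_l) = α_q · g_m(p*_m) for every data link l outgoing from i and every data link m outgoing from j, where g_l(p) = (t_l/(2σ_l)) · ((1/2)·ln(1 + p/σ_l) − t_l)^{−2} · (1 + p/σ_l)^{−1}. -/

import Mathlib

open BigOperators ENNReal

/-- A single-slot energy harvesting network with energy cooperation: nodes `N`,
data links `L` (each with a start node, fixed flow `t l > 0` and noise power `σ l > 0`),
energy links `Q` (each with a start node, end node and transfer efficiency `α q ∈ (0,1]`),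
and harvested energies `E n ≥ 0`. -/
structure Net where
  N : Type
  L : Type
  Q : Type
  [fintypeN : Fintype N]
  [fintypeL : Fintype L]
  [fintypeQ : Fintype Q]
  [decEqN : DecidableEq N]
  startD : L → N
  startE : Q → N
  endE : Q → N
  α : Q → ℝ
  t : L → ℝ
  σ : L → ℝ
  E : N → ℝ
  hα : ∀ q, 0 < α q ∧ α q ≤ 1
  ht : ∀ l, 0 < t l
  hσ : ∀ l, 0 < σ l
  hE : ∀ n, 0 ≤ E n

attribute [instance] Net.fintypeN Net.fintypeL Net.fintypeQ Net.decEqN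

/-- A pair `(p, y)` is feasible: nonnegative energy transfers, link powers at least
`σ_l (e^{2 t_l} − 1)`, and the energy constraint at every node. -/
def Net.Feasible (net : Net) (p : net.L → ℝ) (y : net.Q → ℝ) : Prop :=
  (∀ q, 0 ≤ y q) ∧
  (∀ l, net.σ l * (Real.exp (2 * net.t l) - 1) ≤ p l) ∧
  (∀ n : net.N,
    (∑ l ∈ Finset.univ.filter (fun l => net.startD l = n), p l) +
      (∑ q ∈ Finset.univ.filter (fun q => net.startE q = n), y q) ≤
    net.E n + ∑ q ∈ Finset.univ.filter (fun q => net.endE q = n), net.α q * y q)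

/-- Strict feasibility: feasible with `p_l > σ_l (e^{2 t_l} − 1)` on every data link. -/
def Net.StrictFeasible (net : Net) (p : net.L → ℝ) (y : net.Q → ℝ) : Prop :=
  net.Feasible p y ∧ ∀ l, net.σ l * (Real.exp (2 * net.t l) - 1) < p l

/-- The network delay `D(p) = ∑_l t_l / ((1/2)·ln(1 + p_l/σ_l) − t_l)`, with the
convention that it is `+∞` if `(1/2)·ln(1 + p_l/σ_l) ≤ t_l` for some link `l`. -/
noncomputable def Net.Delay (net : Net) (p : net.L → ℝ) : ℝ≥0∞ :=
  if ∀ l, net.t l < (1 / 2) * Real.log (1 + p l / net.σ l) then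
    ENNReal.ofReal (∑ l, net.t l / ((1 / 2) * Real.log (1 + p l / net.σ l) - net.t l))
  else ⊤

/-- A minimizer of the network delay over feasible pairs. -/
def Net.IsMinimizer (net : Net) (p : net.L → ℝ) (y : net.Q → ℝ) : Prop :=
  net.Feasible p y ∧ ∀ p' y', net.Feasible p' y' → net.Delay p ≤ net.Delay p'

/-- The marginal quantity
`g(p) = (t/(2σ)) · ((1/2)·ln(1 + p/σ) − t)^{−2} · (1 + p/σ)^{−1}`. -/
noncomputable def gMarg (t σ p : ℝ) : ℝ :=
  t / (2 * σ) / ((1 / 2) * Real.log (1 + p / σ) - t) ^ 2 / (1 + p / σ)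

/-!
The delay is a sum of differentiable functions of the individual link powers, with derivatives
`-gMarg`. A strictly feasible pair has finite delay, hence so does a minimizer, i.e. every link power
lies strictly above its threshold. If `y*_q > 0`, sending `δ` less over `q` (for small `δ` of either
sign) while link `l` at its start spends `δ` more and link `m` at its end spends `α_q δ` less keeps
every node balanced and the pair feasible. So `δ = 0` is a local minimum of the delay along this
line, and its derivative there, `-g_l + α_q g_m`, vanishes.
-/

open Filter

noncomputable def linkDelay (t σ p : ℝ) : ℝ :=
  t / ((1 / 2) * Real.log (1 + p / σ) - t)

lemma mul_exp_sub_one_lt_iff {t σ p : ℝ} (hσ : 0 < σ) :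
    σ * (Real.exp (2 * t) - 1) < p ↔ Real.exp (2 * t) < 1 + p / σ := by
  rw [← sub_lt_iff_lt_add', lt_div_iff₀ hσ, mul_comm]

lemma mul_exp_sub_one_le_iff {t σ p : ℝ} (hσ : 0 < σ) :
    σ * (Real.exp (2 * t) - 1) ≤ p ↔ Real.exp (2 * t) ≤ 1 + p / σ := by
  rw [← sub_le_iff_le_add', le_div_iff₀ hσ, mul_comm]

lemma lt_half_log_iff_exp_lt {t x : ℝ} (hx : 0 < x) :
    t < (1 / 2) * Real.log x ↔ Real.exp (2 * t) < x := by
  rw [← Real.lt_log_iff_exp_lt hx]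
  constructor <;> intro h <;> linarith

lemma linkDelay_nonneg {t σ p : ℝ} (ht : 0 ≤ t) (h : t < (1 / 2) * Real.log (1 + p / σ)) :
    0 ≤ linkDelay t σ p :=
  div_nonneg ht (sub_nonneg.2 h.le)

lemma hasDerivAt_linkDelay {t σ p : ℝ} (hp : 1 + p / σ ≠ 0)
    (hd : (1 / 2) * Real.log (1 + p / σ) - t ≠ 0) :
    HasDerivAt (linkDelay t σ) (-gMarg t σ p) p := by
  have hratio : HasDerivAt (fun x : ℝ => 1 + x / σ) (1 / σ) p := by
    simpa using ((hasDerivAt_id p).div_const σ).const_add 1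
  have hden := (((Real.hasDerivAt_log hp).comp p hratio).const_mul (1 / 2)).sub_const t
  refine ((hasDerivAt_const p t).fun_div hden hd).congr_deriv ?_
  simp only [Function.comp_apply, gMarg]
  ring

lemma hasDerivAt_sum_comp_line {ι : Type*} [Fintype ι] {f : ι → ℝ → ℝ} {f' : ι → ℝ}
    {p : ι → ℝ} (hf : ∀ k, HasDerivAt (f k) (f' k) (p k)) (c : ι → ℝ) :
    HasDerivAt (fun δ : ℝ => ∑ k, f k ((p + δ • c) k)) (∑ k, f' k * c k) 0 := by
  refine HasDerivAt.fun_sum fun k _ => ?_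
  have hline : HasDerivAt (fun δ : ℝ => p k + δ * c k) (c k) 0 := by
    simpa using ((hasDerivAt_id (0 : ℝ)).mul_const (c k)).const_add (p k)
  have hfk : HasDerivAt (f k) (f' k) (p k + 0 * c k) := by simpa using hf k
  simp only [Pi.add_apply, Pi.smul_apply, smul_eq_mul]
  exact hfk.comp (0 : ℝ) hline

namespace Net

variable (net : Net)

noncomputable def minPower (l : net.L) : ℝ :=
  net.σ l * (Real.exp (2 * net.t l) - 1)

noncomputable def delaySum (p : net.L → ℝ) : ℝ :=
  ∑ l, linkDelay (net.t l) (net.σ l) (p l)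

variable {net}

lemma exp_lt_one_add_div_of_minPower_lt {l : net.L} {x : ℝ} (h : net.minPower l < x) :
    Real.exp (2 * net.t l) < 1 + x / net.σ l :=
  (mul_exp_sub_one_lt_iff (net.hσ l)).1 h

lemma lt_half_log_of_minPower_lt {l : net.L} {x : ℝ} (h : net.minPower l < x) :
    net.t l < (1 / 2) * Real.log (1 + x / net.σ l) :=
  (lt_half_log_iff_exp_lt ((Real.exp_pos _).trans (exp_lt_one_add_div_of_minPower_lt h))).2
    (exp_lt_one_add_div_of_minPower_lt h)

lemma delay_eq_ofReal_delaySum {p : net.L → ℝ} (hp : ∀ l, net.minPower l < p l) :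
    net.Delay p = ENNReal.ofReal (net.delaySum p) :=
  if_pos fun l => lt_half_log_of_minPower_lt (hp l)

lemma delaySum_nonneg {p : net.L → ℝ} (hp : ∀ l, net.minPower l < p l) :
    0 ≤ net.delaySum p :=
  Finset.sum_nonneg fun l _ => linkDelay_nonneg (net.ht l).le (lt_half_log_of_minPower_lt (hp l))

lemma Feasible.minPower_lt_of_delay_ne_top {p : net.L → ℝ} {y : net.Q → ℝ}
    (hf : net.Feasible p y) (hD : net.Delay p ≠ ⊤) (l : net.L) : net.minPower l < p l := by
  have hlog : net.t l < (1 / 2) * Real.log (1 + p l / net.σ l) := by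
    by_contra h
    exact hD (if_neg fun hall => h (hall l))
  have hexp : Real.exp (2 * net.t l) ≤ 1 + p l / net.σ l :=
    (mul_exp_sub_one_le_iff (net.hσ l)).1 (hf.2.1 l)
  exact (mul_exp_sub_one_lt_iff (net.hσ l)).2
    ((lt_half_log_iff_exp_lt ((Real.exp_pos _).trans_le hexp)).1 hlog)

lemma IsMinimizer.minPower_lt {p : net.L → ℝ} {y : net.Q → ℝ} (hmin : net.IsMinimizer p y)
    (hsf : ∃ p y, net.StrictFeasible p y) (l : net.L) : net.minPower l < p l := by
  obtain ⟨p₀, y₀, hf₀, hp₀⟩ := hsf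
  refine hmin.1.minPower_lt_of_delay_ne_top (ne_top_of_le_ne_top ?_ (hmin.2 p₀ y₀ hf₀)) l
  rw [delay_eq_ofReal_delaySum hp₀]
  exact ENNReal.ofReal_ne_top

lemma IsMinimizer.delaySum_le {p p' : net.L → ℝ} {y y' : net.Q → ℝ} (hmin : net.IsMinimizer p y)
    (hp : ∀ l, net.minPower l < p l) (hf' : net.Feasible p' y') (hp' : ∀ l, net.minPower l < p' l) :
    net.delaySum p ≤ net.delaySum p' := by
  have h := hmin.2 p' y' hf'
  rwa [delay_eq_ofReal_delaySum hp, delay_eq_ofReal_delaySum hp',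
    ENNReal.ofReal_le_ofReal_iff (delaySum_nonneg hp')] at h

lemma hasDerivAt_linkDelay_of_minPower_lt {l : net.L} {x : ℝ} (h : net.minPower l < x) :
    HasDerivAt (linkDelay (net.t l) (net.σ l)) (-gMarg (net.t l) (net.σ l) x) x :=
  hasDerivAt_linkDelay ((Real.exp_pos _).trans (exp_lt_one_add_div_of_minPower_lt h)).ne'
    (sub_pos.2 (lt_half_log_of_minPower_lt h)).ne'

/-- Sending one unit less over `q` frees one unit for `l` at its start and costs `α q` units of `m`
at its end. -/
noncomputable def transferDir [DecidableEq net.L] (q : net.Q) (l m : net.L) : net.L → ℝ :=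
  Pi.single l 1 - net.α q • Pi.single m 1

lemma sum_mul_transferDir [DecidableEq net.L] (g : net.L → ℝ) (q : net.Q) (l m : net.L) :
    ∑ k, g k * net.transferDir q l m k = g l - net.α q * g m := by
  simp only [transferDir, Pi.sub_apply, Pi.smul_apply, smul_eq_mul, Pi.single_apply, mul_ite,
    mul_one, mul_zero, mul_sub, Finset.sum_sub_distrib, Finset.sum_ite_eq', Finset.mem_univ,
    if_true]
  ring

lemma Feasible.transfer [DecidableEq net.L] [DecidableEq net.Q] {p : net.L → ℝ} {y : net.Q → ℝ}
    (hf : net.Feasible p y) {q : net.Q} {l m : net.L}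
    (hl : net.startD l = net.startE q) (hm : net.startD m = net.endE q) {δ : ℝ} (hδ : δ ≤ y q)
    (hp : ∀ k, net.minPower k ≤ (p + δ • net.transferDir q l m) k) :
    net.Feasible (p + δ • net.transferDir q l m) (y - δ • Pi.single q 1) := by
  refine ⟨fun r => ?_, hp, fun n => ?_⟩
  · rcases eq_or_ne r q with rfl | hr
    · simpa using hδ
    · simpa [hr] using hf.1 r
  · have := hf.2.2 n
    simp only [transferDir, Pi.add_apply, Pi.sub_apply, Pi.smul_apply, smul_eq_mul, Pi.single_apply,
      mul_sub, mul_ite, mul_one, mul_zero, Finset.sum_add_distrib, Finset.sum_sub_distrib,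
      Finset.sum_ite_eq', Finset.mem_filter, Finset.mem_univ, true_and, hl, hm]
    split_ifs <;> linarith

lemma IsMinimizer.isLocalMin_transfer [DecidableEq net.L] [DecidableEq net.Q]
    {p : net.L → ℝ} {y : net.Q → ℝ} (hmin : net.IsMinimizer p y)
    (hsf : ∃ p y, net.StrictFeasible p y) {q : net.Q} (hq : 0 < y q) {l m : net.L}
    (hl : net.startD l = net.startE q) (hm : net.startD m = net.endE q) :
    IsLocalMin (fun δ : ℝ => net.delaySum (p + δ • net.transferDir q l m)) 0 := by
  have hp := hmin.minPower_lt hsf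
  have hline : ∀ᶠ δ in nhds (0 : ℝ), ∀ k, net.minPower k < (p + δ • net.transferDir q l m) k := by
    refine eventually_all.2 fun k => ?_
    have hcont : Continuous fun δ : ℝ => p k + δ * net.transferDir q l m k := by fun_prop
    simpa using (hcont.tendsto 0).eventually_const_lt (by simpa using hp k)
  filter_upwards [hline, eventually_lt_nhds hq] with δ hδp hδq
  simpa using hmin.delaySum_le hp (hmin.1.transfer hl hm hδq.le fun k => (hδp k).le) hδp

end Net

/-- If a strictly feasible pair exists, then at every minimizer
`(p*, y*)` of the network delay, whenever `y*_q > 0` on an energy link `q` from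
node `i` to node `j`, one has `g_l(p*_l) = α_q · g_m(p*_m)` for every data link
`l` outgoing from `i` and every data link `m` outgoing from `j`. -/
theorem minimizer_energy_transfer_marginals (net : Net)
    (hsf : ∃ p y, net.StrictFeasible p y)
    (pstar : net.L → ℝ) (ystar : net.Q → ℝ)
    (hmin : net.IsMinimizer pstar ystar) :
    ∀ q : net.Q, 0 < ystar q →
      ∀ l m : net.L, net.startD l = net.startE q → net.startD m = net.endE q →
        gMarg (net.t l) (net.σ l) (pstar l) =
          net.α q * gMarg (net.t m) (net.σ m) (pstar m) := by
  classical
  intro q hq l m hl hm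
  have hp := hmin.minPower_lt hsf
  have hderiv := hasDerivAt_sum_comp_line (fun k => Net.hasDerivAt_linkDelay_of_minPower_lt (hp k))
    (net.transferDir q l m)
  have hcrit := (hmin.isLocalMin_transfer hsf hq hl hm).hasDerivAt_eq_zero hderiv
  rw [Net.sum_mul_transferDir (fun k => -gMarg (net.t k) (net.σ k) (pstar k))] at hcrit
  linarith
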